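/- Limits of the bias factor of the Marchenko-Pastur integral: for fixed ξ₀ > 0 let ξ(α) = ξ₀/α and χ_B(α) = ∫ (1 + ξ(α) t)^{-2} dμ_α(t). Then χ_B(α) → 1 as α → ∞ and χ_B(α) → 0 as α → 0⁺. -/

import Mathlib

/-!
The Marchenko–Pastur law is an atom of mass `max 0 (1 - 1/α)` at `0` plus a density supported on
`[α₋, α₊]`; when `α₋ > 0`, that density is bounded by `2√α / (2π α α₋)` on an interval of length
`4√α`, so the continuous part carries mass at most `4 / (π α₋)`. The integrand
`(1 + ξ t)⁻²` equals `1` at the atom and lies in `[0, (1 + ξ α₋)⁻²]` on the support of the density.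
As `α → ∞`, the atom has mass `→ 1` while `α₋ → ∞`. As `α → 0⁺`, there is no atom, `α₋ → 1` and
`ξ(α) α₋ = ξ₀ α₋ / α → ∞`.
-/

open MeasureTheory Real Filter

/-- The Marchenko–Pastur distribution with ratio parameter `α`:
`μ_α = max(0, 1−1/α) δ₀ + (√((α₊−t)(t−α₋))/(2παt)) 1_{[α₋,α₊]}(t) dt`, `α_± = (1±√α)²`. -/
noncomputable def mpMeasure (α : ℝ) : Measure ℝ :=
  ENNReal.ofReal (max 0 (1 - 1 / α)) • Measure.dirac 0 +
    volume.withDensity fun t => ENNReal.ofReal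
      ((Set.Icc ((1 - Real.sqrt α) ^ 2) ((1 + Real.sqrt α) ^ 2)).indicator
        (fun s => Real.sqrt (((1 + Real.sqrt α) ^ 2 - s) * (s - (1 - Real.sqrt α) ^ 2)) /
          (2 * π * α * s)) t)

open Set Topology

namespace MarchenkoPastur

noncomputable def lowerEdge (α : ℝ) : ℝ := (1 - √α) ^ 2

noncomputable def upperEdge (α : ℝ) : ℝ := (1 + √α) ^ 2

noncomputable def atomWeight (α : ℝ) : ℝ := max 0 (1 - 1 / α)

noncomputable def density (α t : ℝ) : ℝ :=
  (Icc (lowerEdge α) (upperEdge α)).indicator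
    (fun s => √((upperEdge α - s) * (s - lowerEdge α)) / (2 * π * α * s)) t

/-- The bias factor `χ_B(α)` of the Marchenko–Pastur integral, for `ξ(α) = ξ₀ / α`. -/
noncomputable def biasFactor (ξ₀ α : ℝ) : ℝ := ∫ t, ((1 + (ξ₀ / α) * t) ^ 2)⁻¹ ∂(mpMeasure α)

theorem mpMeasure_eq (α : ℝ) :
    mpMeasure α = ENNReal.ofReal (atomWeight α) • Measure.dirac 0 +
      volume.withDensity fun t => ENNReal.ofReal (density α t) :=
  rfl

theorem upperEdge_sub_lowerEdge (α : ℝ) : upperEdge α - lowerEdge α = 4 * √α := by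
  rw [upperEdge, lowerEdge]; ring

theorem atomWeight_nonneg (α : ℝ) : 0 ≤ atomWeight α := le_max_left _ _

theorem atomWeight_eq_zero {α : ℝ} (hα : 0 < α) (hα₁ : α ≤ 1) : atomWeight α = 0 :=
  max_eq_left <| sub_nonpos.2 <| (one_le_div hα).2 hα₁

theorem tendsto_atomWeight_atTop : Tendsto atomWeight atTop (𝓝 1) := by
  have h := (tendsto_const_nhds (x := (1 : ℝ))).sub
    (tendsto_const_nhds.div_atTop tendsto_id : Tendsto (fun α : ℝ => 1 / α) atTop (𝓝 0))
  unfold atomWeight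
  simpa [one_div] using (tendsto_const_nhds (x := (0 : ℝ))).max h

theorem tendsto_lowerEdge_atTop : Tendsto lowerEdge atTop atTop := by
  have h : Tendsto (fun α => (√α - 1) ^ 2) atTop atTop :=
    (tendsto_pow_atTop two_ne_zero).comp (tendsto_atTop_add_const_right _ (-1) tendsto_sqrt_atTop)
  refine h.congr fun α => ?_
  rw [lowerEdge]; ring

theorem tendsto_lowerEdge_nhdsGT_zero : Tendsto lowerEdge (𝓝[>] 0) (𝓝 1) := by
  have h : Continuous lowerEdge := by unfold lowerEdge; fun_prop
  simpa [lowerEdge] using (h.tendsto 0).mono_left nhdsWithin_le_nhds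

theorem measurable_density (α : ℝ) : Measurable (density α) :=
  Measurable.indicator (by fun_prop) measurableSet_Icc

theorem density_nonneg {α : ℝ} (hα : 0 ≤ α) (t : ℝ) : 0 ≤ density α t := by
  refine indicator_nonneg (fun s hs => div_nonneg (sqrt_nonneg _) ?_) t
  have : 0 ≤ s := (sq_nonneg _).trans hs.1
  positivity

theorem density_le {α t : ℝ} (hα : 0 < α) (ha : 0 < lowerEdge α)
    (ht : t ∈ Icc (lowerEdge α) (upperEdge α)) :
    density α t ≤ 2 * √α / (2 * π * α * lowerEdge α) := by
  rw [density, indicator_of_mem ht]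
  -- AM–GM: `(b - t)(t - a) ≤ ((b - a) / 2)²` and `(b - a) / 2 = 2√α`.
  have hnum : √((upperEdge α - t) * (t - lowerEdge α)) ≤ 2 * √α := by
    refine sqrt_le_iff.2 ⟨by positivity, ?_⟩
    have hba : (upperEdge α - lowerEdge α) ^ 2 = (4 * √α) ^ 2 := by rw [upperEdge_sub_lowerEdge]
    nlinarith [sq_nonneg (upperEdge α - t - (t - lowerEdge α))]
  have hden : 2 * π * α * lowerEdge α ≤ 2 * π * α * t := by gcongr; exact ht.1
  exact div_le_div₀ (by positivity) hnum (by positivity) hden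

section Integrals

variable {α : ℝ} {φ : ℝ → ℝ} {M : ℝ}

theorem norm_density_mul_le (hα : 0 < α) (ha : 0 < lowerEdge α)
    (hM : ∀ t ∈ Icc (lowerEdge α) (upperEdge α), ‖φ t‖ ≤ M) (t : ℝ) :
    ‖density α t * φ t‖ ≤ (Icc (lowerEdge α) (upperEdge α)).indicator
      (fun _ => 2 * √α / (2 * π * α * lowerEdge α) * M) t := by
  by_cases ht : t ∈ Icc (lowerEdge α) (upperEdge α)
  · rw [indicator_of_mem ht, norm_mul, Real.norm_of_nonneg (density_nonneg hα.le t)]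
    exact mul_le_mul (density_le hα ha ht) (hM t ht) (norm_nonneg _)
      ((density_nonneg hα.le t).trans (density_le hα ha ht))
  · simp [density, indicator_of_notMem ht]

theorem integrable_indicator_Icc_lowerEdge_upperEdge (c : ℝ) :
    Integrable ((Icc (lowerEdge α) (upperEdge α)).indicator fun _ => c) :=
  (integrable_indicator_iff measurableSet_Icc).2 (integrableOn_const measure_Icc_lt_top.ne)

theorem norm_integral_density_mul_le (hα : 0 < α) (ha : 0 < lowerEdge α)
    (hM : ∀ t ∈ Icc (lowerEdge α) (upperEdge α), ‖φ t‖ ≤ M) :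
    ‖∫ t, density α t * φ t‖ ≤ 4 * M / (π * lowerEdge α) := by
  refine (norm_integral_le_of_norm_le (integrable_indicator_Icc_lowerEdge_upperEdge _)
    (Eventually.of_forall (norm_density_mul_le hα ha hM))).trans_eq ?_
  have hab : 0 ≤ upperEdge α - lowerEdge α := by rw [upperEdge_sub_lowerEdge]; positivity
  rw [integral_indicator measurableSet_Icc, setIntegral_const, measureReal_def, volume_Icc,
    ENNReal.toReal_ofReal hab, smul_eq_mul, upperEdge_sub_lowerEdge]
  field_simp
  rw [sq_sqrt hα.le]

theorem integral_mpMeasure (hα : 0 < α) (ha : 0 < lowerEdge α) (hφ : Measurable φ)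
    (hM : ∀ t ∈ Icc (lowerEdge α) (upperEdge α), ‖φ t‖ ≤ M) :
    ∫ t, φ t ∂(mpMeasure α) = atomWeight α * φ 0 + ∫ t, density α t * φ t := by
  have hρ : Measurable fun t => ENNReal.ofReal (density α t) :=
    (measurable_density α).ennreal_ofReal
  have hρ_lt_top : ∀ᵐ t, ENNReal.ofReal (density α t) < ⊤ :=
    Eventually.of_forall fun _ => ENNReal.ofReal_lt_top
  have hsmul : ∀ t, (ENNReal.ofReal (density α t)).toReal • φ t = density α t * φ t := fun t => by
    rw [ENNReal.toReal_ofReal (density_nonneg hα.le t), smul_eq_mul]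
  have hatom : Integrable φ (ENNReal.ofReal (atomWeight α) • Measure.dirac 0) :=
    (integrable_dirac enorm_lt_top).smul_measure ENNReal.ofReal_ne_top
  have hcont : Integrable φ (volume.withDensity fun t => ENNReal.ofReal (density α t)) := by
    rw [integrable_withDensity_iff_integrable_smul' hρ hρ_lt_top]
    simp only [hsmul]
    exact Integrable.mono' (integrable_indicator_Icc_lowerEdge_upperEdge _)
      ((measurable_density α).mul hφ).aestronglyMeasurable
      (Eventually.of_forall (norm_density_mul_le hα ha hM))
  rw [mpMeasure_eq, integral_add_measure hatom hcont, integral_smul_measure, integral_dirac,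
    integral_withDensity_eq_integral_toReal_smul hρ hρ_lt_top, ENNReal.toReal_ofReal
    (atomWeight_nonneg α), smul_eq_mul]
  simp only [hsmul]

end Integrals

theorem inv_one_add_mul_sq_anti {c a t : ℝ} (hc : 0 ≤ c) (ha : 0 ≤ a) (hat : a ≤ t) :
    ((1 + c * t) ^ 2)⁻¹ ≤ ((1 + c * a) ^ 2)⁻¹ := by
  gcongr

theorem biasFactor_nonneg (ξ₀ α : ℝ) : 0 ≤ biasFactor ξ₀ α :=
  integral_nonneg fun _ => by positivity

theorem biasFactor_bounds {ξ₀ α : ℝ} (hα : 0 < α) (ha : 0 < lowerEdge α)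
    {M : ℝ} (hM : ∀ t ∈ Icc (lowerEdge α) (upperEdge α), ((1 + (ξ₀ / α) * t) ^ 2)⁻¹ ≤ M) :
    atomWeight α ≤ biasFactor ξ₀ α ∧
      biasFactor ξ₀ α ≤ atomWeight α + 4 * M / (π * lowerEdge α) := by
  have hM' : ∀ t ∈ Icc (lowerEdge α) (upperEdge α), ‖((1 + (ξ₀ / α) * t) ^ 2)⁻¹‖ ≤ M :=
    fun t ht => by rw [Real.norm_of_nonneg (by positivity)]; exact hM t ht
  have hχ := integral_mpMeasure hα ha (by fun_prop) hM'
  simp only [mul_zero, add_zero, one_pow, inv_one, mul_one] at hχ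
  rw [biasFactor, hχ]
  constructor
  · have : 0 ≤ ∫ t, density α t * ((1 + ξ₀ / α * t) ^ 2)⁻¹ :=
      integral_nonneg fun t => mul_nonneg (density_nonneg hα.le t) (by positivity)
    linarith
  · have := (le_abs_self _).trans (norm_integral_density_mul_le hα ha hM')
    linarith

theorem tendsto_biasFactor_atTop {ξ₀ : ℝ} (hξ₀ : 0 ≤ ξ₀) :
    Tendsto (biasFactor ξ₀) atTop (𝓝 1) := by
  have hupper : Tendsto (fun α => atomWeight α + 4 * 1 / (π * lowerEdge α)) atTop (𝓝 1) := by
    simpa using tendsto_atomWeight_atTop.add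
      (tendsto_const_nhds.div_atTop (tendsto_lowerEdge_atTop.const_mul_atTop pi_pos))
  have hbounds : ∀ᶠ α in atTop, atomWeight α ≤ biasFactor ξ₀ α ∧
      biasFactor ξ₀ α ≤ atomWeight α + 4 * 1 / (π * lowerEdge α) := by
    filter_upwards [eventually_gt_atTop 0, tendsto_lowerEdge_atTop.eventually_gt_atTop 0]
      with α hα ha
    refine biasFactor_bounds hα ha fun t ht => ?_
    simpa using inv_one_add_mul_sq_anti (by positivity) le_rfl (ha.le.trans ht.1)
  exact tendsto_of_tendsto_of_tendsto_of_le_of_le' tendsto_atomWeight_atTop hupper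
    (hbounds.mono fun _ h => h.1) (hbounds.mono fun _ h => h.2)

theorem tendsto_biasFactor_nhdsGT_zero {ξ₀ : ℝ} (hξ₀ : 0 < ξ₀) :
    Tendsto (biasFactor ξ₀) (𝓝[>] 0) (𝓝 0) := by
  set M : ℝ → ℝ := fun α => ((1 + (ξ₀ / α) * lowerEdge α) ^ 2)⁻¹
  have hM : Tendsto M (𝓝[>] 0) (𝓝 0) := by
    have hξ : Tendsto (fun α : ℝ => ξ₀ / α) (𝓝[>] 0) atTop := by
      simpa [div_eq_mul_inv] using tendsto_inv_nhdsGT_zero.const_mul_atTop hξ₀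
    exact tendsto_inv_atTop_zero.comp <| (tendsto_pow_atTop two_ne_zero).comp <|
      tendsto_atTop_add_const_left _ 1 (hξ.atTop_mul_pos one_pos tendsto_lowerEdge_nhdsGT_zero)
  have hupper : Tendsto (fun α => 4 * M α / (π * lowerEdge α)) (𝓝[>] 0) (𝓝 0) := by
    have h := (hM.const_mul 4).div (tendsto_lowerEdge_nhdsGT_zero.const_mul π) (by positivity)
    rwa [mul_zero, zero_div] at h
  have hbounds : ∀ᶠ α in 𝓝[>] 0, 0 ≤ biasFactor ξ₀ α ∧
      biasFactor ξ₀ α ≤ 4 * M α / (π * lowerEdge α) := by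
    filter_upwards [Ioo_mem_nhdsGT one_pos,
      tendsto_lowerEdge_nhdsGT_zero.eventually_const_lt one_pos] with α ⟨hα, hα₁⟩ ha
    obtain ⟨-, hle⟩ := biasFactor_bounds hα ha fun t ht =>
      inv_one_add_mul_sq_anti (div_nonneg hξ₀.le hα.le) ha.le ht.1
    rw [atomWeight_eq_zero hα hα₁.le, zero_add] at hle
    exact ⟨biasFactor_nonneg ξ₀ α, hle⟩
  exact tendsto_of_tendsto_of_tendsto_of_le_of_le' tendsto_const_nhds hupper
    (hbounds.mono fun _ h => h.1) (hbounds.mono fun _ h => h.2)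

end MarchenkoPastur

open MarchenkoPastur in
/-- Limits of the bias factor `χ_B(α) = ∫ (1 + (ξ₀/α) t)^{-2} dμ_α(t)`:
`χ_B(α) → 1` as `α → ∞` and `χ_B(α) → 0` as `α → 0⁺`. -/
theorem mp_bias_factor_limits (ξ₀ : ℝ) (hξ₀ : 0 < ξ₀) :
    Tendsto (fun α : ℝ => ∫ t, ((1 + (ξ₀ / α) * t) ^ 2)⁻¹ ∂(mpMeasure α)) atTop (nhds 1) ∧
    Tendsto (fun α : ℝ => ∫ t, ((1 + (ξ₀ / α) * t) ^ 2)⁻¹ ∂(mpMeasure α))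
      (nhdsWithin 0 (Set.Ioi 0)) (nhds 0) :=
  ⟨tendsto_biasFactor_atTop hξ₀.le, tendsto_biasFactor_nhdsGT_zero hξ₀⟩
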